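/- Let G be a group, n a positive integer, and φ : M → N a morphism of G-modules such that M and N are both n-divisible and φ restricts to an isomorphism of G-modules M[n] → N[n]. Assume moreover that the induced homomorphism M^G/n·M^G → N^G/n·N^G is zero. Then the kernel of the induced homomorphism H^1(G, M)[n] → H^1(G, N)[n] between n-torsion subgroups of first cohomology is isomorphic, as an abelian group, to N^G/n·N^G. -/

import Mathlib

/-! Basic definitions: fixed points, n-torsion, first group cohomology of a
`G`-module (an abelian group with a `DistribMulAction` of `G`), functoriality,
and the Kummer-theoretic connecting cocycle. -/

section Defs

variable (G : Type) [Group G]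

/-- The subgroup of `G`-fixed points of a `G`-module `M`. -/
def fixedAddSubgroup (M : Type) [AddCommGroup M] [DistribMulAction G M] :
    AddSubgroup M where
  carrier := {x | ∀ g : G, g • x = x}
  zero_mem' := fun g => smul_zero g
  add_mem' := fun {a b} ha hb g => by rw [smul_add, ha g, hb g]
  neg_mem' := fun {a} ha g => by rw [smul_neg, ha g]

/-- The `n`-torsion subgroup `A[n]` of an abelian group `A`. -/
def nTorsion (A : Type) [AddCommGroup A] (n : ℕ) : AddSubgroup A where
  carrier := {x | n • x = 0}
  zero_mem' := smul_zero n
  add_mem' := fun {a b} ha hb => by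
    have ha' : n • a = 0 := ha
    have hb' : n • b = 0 := hb
    show n • (a + b) = 0
    rw [smul_add, ha', hb', add_zero]
  neg_mem' := fun {a} ha => by
    have ha' : n • a = 0 := ha
    show n • (-a) = 0
    rw [smul_neg, ha', neg_zero]

/-- The multiplication-by-`n` homomorphism of an abelian group. -/
def nsmulHom (A : Type) [AddCommGroup A] (n : ℕ) : A →+ A where
  toFun x := n • x
  map_zero' := smul_zero n
  map_add' := smul_add n

/-- The subgroup `n·A` of an abelian group `A`. -/
def nMultiples (A : Type) [AddCommGroup A] (n : ℕ) : AddSubgroup A :=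
  (nsmulHom A n).range

variable (M : Type) [AddCommGroup M] [DistribMulAction G M]

/-- The induced `G`-action on the `n`-torsion subgroup. -/
instance nTorsionAction (n : ℕ) : DistribMulAction G (nTorsion M n) where
  smul g x := ⟨g • (x : M), by
    have hx : n • (x : M) = 0 := x.2
    show n • (g • (x : M)) = 0
    rw [← smul_comm g n (x : M), hx, smul_zero]⟩
  one_smul x := Subtype.ext (one_smul G (x : M))
  mul_smul g h x := Subtype.ext (mul_smul g h (x : M))
  smul_zero g := Subtype.ext (smul_zero g)
  smul_add g x y := Subtype.ext (smul_add g (x : M) (y : M))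

@[simp] lemma nTorsion_smul_coe (n : ℕ) (g : G) (x : nTorsion M n) :
    ((g • x : nTorsion M n) : M) = g • (x : M) := rfl

/-- The group of (inhomogeneous) 1-cocycles of `G` with coefficients in `M`. -/
def oneCocycles : AddSubgroup (G → M) where
  carrier := {f | ∀ σ τ : G, f (σ * τ) = f σ + σ • f τ}
  zero_mem' := fun σ τ => by simp
  add_mem' := fun {a b} ha hb σ τ => by
    simp only [Pi.add_apply, ha σ τ, hb σ τ, smul_add]
    abel
  neg_mem' := fun {a} ha σ τ => by
    simp only [Pi.neg_apply, ha σ τ, smul_neg]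
    abel

/-- The group of 1-coboundaries of `G` with coefficients in `M`. -/
def oneCoboundaries : AddSubgroup (G → M) where
  carrier := {f | ∃ x : M, ∀ σ : G, f σ = σ • x - x}
  zero_mem' := ⟨0, fun σ => by simp⟩
  add_mem' := by
    rintro a b ⟨x, hx⟩ ⟨y, hy⟩
    exact ⟨x + y, fun σ => by rw [Pi.add_apply, hx σ, hy σ, smul_add]; abel⟩
  neg_mem' := by
    rintro a ⟨x, hx⟩
    exact ⟨-x, fun σ => by rw [Pi.neg_apply, hx σ, smul_neg]; abel⟩

/-- The first group cohomology `H¹(G, M)`, defined as 1-cocycles modulo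
1-coboundaries. -/
abbrev H1 := oneCocycles G M ⧸ ((oneCoboundaries G M).addSubgroupOf (oneCocycles G M))

/-- The class of a 1-cocycle in `H¹(G, M)`. -/
def H1mk : oneCocycles G M → H1 G M := QuotientAddGroup.mk

variable {G M}
variable {N : Type} [AddCommGroup N] [DistribMulAction G N]

/-- The map on 1-cocycles induced by a `G`-equivariant homomorphism. -/
def oneCocyclesMap (φ : M →+ N) (hφ : ∀ (g : G) (x : M), φ (g • x) = g • φ x) :
    oneCocycles G M →+ oneCocycles G N where
  toFun f := ⟨fun σ => φ ((f : G → M) σ), fun σ τ => by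
    show φ ((f : G → M) (σ * τ)) = φ ((f : G → M) σ) + σ • φ ((f : G → M) τ)
    rw [f.2 σ τ, map_add, hφ]⟩
  map_zero' := by
    apply Subtype.ext
    funext σ
    simp
  map_add' f₁ f₂ := by
    apply Subtype.ext
    funext σ
    simp

/-- The map on `H¹` induced by a `G`-equivariant homomorphism. -/
def H1Map (φ : M →+ N) (hφ : ∀ (g : G) (x : M), φ (g • x) = g • φ x) :
    H1 G M →+ H1 G N :=
  QuotientAddGroup.map _ _ (oneCocyclesMap φ hφ) (by
    rintro ⟨f, hf⟩ hmem
    rw [AddSubgroup.mem_addSubgroupOf] at hmem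
    obtain ⟨x, hx⟩ := hmem
    rw [AddSubgroup.mem_comap, AddSubgroup.mem_addSubgroupOf]
    refine ⟨φ x, fun σ => ?_⟩
    show φ (f σ) = σ • φ x - φ x
    have hx' : f σ = σ • x - x := hx σ
    rw [hx', map_sub, hφ])

variable (G M)

/-- The Kummer cocycle attached to `y` with `n • y` a fixed point: the 1-cocycle
`σ ↦ σ • y - y` with values in the `n`-torsion of `M`. -/
def kummerCocycle (n : ℕ) (y : M) (hy : (n • y) ∈ fixedAddSubgroup G M) :
    oneCocycles G (nTorsion M n) :=
  ⟨fun σ => ⟨σ • y - y, by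
      show n • (σ • y - y) = 0
      rw [smul_sub, ← smul_comm σ n y, hy σ, sub_self]⟩,
   fun σ τ => by
      apply Subtype.ext
      show (σ * τ) • y - y = (σ • y - y) + σ • (τ • y - y)
      rw [mul_smul, smul_sub]
      abel⟩

end Defs
section Maps

variable {G : Type} [Group G]

/-- A homomorphism of abelian groups restricts to the `n`-torsion subgroups. -/
def torsMap {A B : Type} [AddCommGroup A] [AddCommGroup B] (n : ℕ) (f : A →+ B) :
    ↥(nTorsion A n) →+ ↥(nTorsion B n) where
  toFun x := ⟨f (x : A), by
    have hx : n • (x : A) = 0 := x.2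
    show n • f (x : A) = 0
    rw [← map_nsmul f, hx, map_zero]⟩
  map_zero' := Subtype.ext (map_zero f)
  map_add' a b := Subtype.ext (map_add f (a : A) (b : A))

/-- A `G`-equivariant homomorphism restricts to the subgroups of fixed
points. -/
def fixedMap {M N : Type} [AddCommGroup M] [DistribMulAction G M]
    [AddCommGroup N] [DistribMulAction G N]
    (φ : M →+ N) (hφ : ∀ (g : G) (x : M), φ (g • x) = g • φ x) :
    ↥(fixedAddSubgroup G M) →+ ↥(fixedAddSubgroup G N) where
  toFun x := ⟨φ (x : M), fun g => by
    have hx : ∀ g : G, g • (x : M) = (x : M) := x.2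
    rw [← hφ g (x : M), hx g]⟩
  map_zero' := Subtype.ext (map_zero φ)
  map_add' a b := Subtype.ext (map_add φ (a : M) (b : M))

end Maps

/-! Let `W = {w ∈ N | n • w ∈ N^G}`. Sending `w ∈ W` to the class of the cocycle
`σ ↦ φ⁻¹(σ • w - w)`, with `φ⁻¹` the inverse of `φ` on `n`-torsion, maps `W` onto the
kernel of `H¹(G, M)[n] → H¹(G, N)[n]` (onto because `M` is `n`-divisible), while
`w ↦ n • w` maps `W` onto `N^G / n·N^G` (because `N` is `n`-divisible). Both maps kill
exactly the `w` with `n • w ∈ n·N^G`; for the first one this uses that `φ(M^G) ⊆ n·N^G`. -/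

noncomputable def AddMonoidHom.addEquivOfKerEq {A B C : Type} [AddGroup A] [AddGroup B]
    [AddGroup C] (f : A →+ B) (g : A →+ C) (hf : Function.Surjective f)
    (hg : Function.Surjective g) (h : f.ker = g.ker) : B ≃+ C :=
  (QuotientAddGroup.quotientKerEquivOfSurjective f hf).symm.trans
    ((QuotientAddGroup.quotientAddEquivOfEq h).trans
      (QuotientAddGroup.quotientKerEquivOfSurjective g hg))

section Torsion

variable {M N : Type} [AddCommGroup M] [AddCommGroup N] {n : ℕ}

lemma mem_nTorsion {x : M} : x ∈ nTorsion M n ↔ n • x = 0 :=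
  Iff.rfl

noncomputable def nTorsionEquivOfBijOn (φ : M →+ N)
    (hbij : Set.BijOn φ (nTorsion M n : Set M) (nTorsion N n : Set N)) :
    nTorsion M n ≃+ nTorsion N n :=
  { hbij.equiv φ with map_add' := fun a b => Subtype.ext (map_add φ (a : M) b) }

variable (φ : M →+ N) (hbij : Set.BijOn φ (nTorsion M n : Set M) (nTorsion N n : Set N))

@[simp] lemma coe_nTorsionEquivOfBijOn (x : nTorsion M n) :
    (nTorsionEquivOfBijOn φ hbij x : N) = φ x := rfl

lemma map_nTorsionEquivOfBijOn_symm (y : nTorsion N n) :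
    φ ((nTorsionEquivOfBijOn φ hbij).symm y) = y := by
  rw [← coe_nTorsionEquivOfBijOn φ hbij, AddEquiv.apply_symm_apply]

lemma nTorsionEquivOfBijOn_symm_smul {G : Type} [Group G] [DistribMulAction G M]
    [DistribMulAction G N] (hφ : ∀ (g : G) (x : M), φ (g • x) = g • φ x) (g : G)
    (y : nTorsion N n) :
    (nTorsionEquivOfBijOn φ hbij).symm (g • y) =
      g • (nTorsionEquivOfBijOn φ hbij).symm y := by
  rw [AddEquiv.symm_apply_eq]
  ext
  rw [nTorsion_smul_coe, coe_nTorsionEquivOfBijOn, nTorsion_smul_coe, hφ,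
    map_nTorsionEquivOfBijOn_symm]

end Torsion

section Cohomology

variable {G M N : Type} [Group G] [AddCommGroup M] [DistribMulAction G M]
  [AddCommGroup N] [DistribMulAction G N]

lemma H1mk_surjective : Function.Surjective (H1mk G M) :=
  QuotientAddGroup.mk_surjective

lemma H1mk_eq_zero_iff (f : oneCocycles G M) :
    H1mk G M f = 0 ↔ (f : G → M) ∈ oneCoboundaries G M :=
  (QuotientAddGroup.eq_zero_iff f).trans (AddSubgroup.mem_addSubgroupOf)

lemma H1mk_nsmul (k : ℕ) (f : oneCocycles G M) : H1mk G M (k • f) = k • H1mk G M f :=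
  map_nsmul (QuotientAddGroup.mk' _) k f

lemma H1mk_sub (f f' : oneCocycles G M) : H1mk G M (f - f') = H1mk G M f - H1mk G M f' :=
  rfl

lemma H1Map_H1mk (φ : M →+ N) (hφ : ∀ (g : G) (x : M), φ (g • x) = g • φ x)
    (f : oneCocycles G M) : H1Map φ hφ (H1mk G M f) = H1mk G N (oneCocyclesMap φ hφ f) :=
  rfl

lemma smul_sub_self_mem_nTorsion {n : ℕ} {w : N} (hw : n • w ∈ fixedAddSubgroup G N)
    (σ : G) : σ • w - w ∈ nTorsion N n := by
  rw [mem_nTorsion, smul_sub, ← smul_comm σ n w, hw σ, sub_self]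

lemma nsmul_mem_fixedAddSubgroup_of_smul_sub_self_mem_nTorsion {n : ℕ} {x : M}
    (hx : ∀ σ : G, σ • x - x ∈ nTorsion M n) : n • x ∈ fixedAddSubgroup G M := by
  intro σ
  have h := mem_nTorsion.1 (hx σ)
  rwa [smul_sub, smul_comm n σ x, sub_eq_zero] at h

def coboundaryCocycle (y : M) : oneCocycles G M :=
  ⟨fun σ => σ • y - y, fun σ τ => by
    show (σ * τ) • y - y = (σ • y - y) + σ • (τ • y - y)
    rw [mul_smul, smul_sub]; abel⟩

lemma H1mk_coboundaryCocycle (y : M) : H1mk G M (coboundaryCocycle y) = 0 :=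
  (H1mk_eq_zero_iff _).2 ⟨y, fun _ => rfl⟩

end Cohomology

section Kummer

variable (G : Type) [Group G] (N : Type) [AddCommGroup N] [DistribMulAction G N] (n : ℕ)

def nsmulPreimageFixed : AddSubgroup N :=
  (fixedAddSubgroup G N).comap (nsmulHom N n)

variable {G N n} in
lemma nsmul_mem_fixedAddSubgroup (w : nsmulPreimageFixed G N n) :
    n • (w : N) ∈ fixedAddSubgroup G N :=
  w.2

def kummerHom : nsmulPreimageFixed G N n →+ oneCocycles G (nTorsion N n) where
  toFun w := kummerCocycle G N n w (nsmul_mem_fixedAddSubgroup w)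
  map_zero' := by
    ext σ
    show σ • (0 : N) - 0 = 0
    rw [smul_zero, sub_zero]
  map_add' w w' := by
    ext σ
    show σ • (w + w' : N) - (w + w') = (σ • (w : N) - w) + (σ • (w' : N) - w')
    rw [smul_add]; abel

def nsmulToFixed : nsmulPreimageFixed G N n →+ fixedAddSubgroup G N :=
  ((nsmulHom N n).comp (nsmulPreimageFixed G N n).subtype).codRestrict _ fun w => w.2

variable {G N n}

lemma nsmulToFixed_surjective (hdivN : ∀ x : N, ∃ y : N, n • y = x) :
    Function.Surjective (nsmulToFixed G N n) := fun z => by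
  obtain ⟨w, hw⟩ := hdivN z
  exact ⟨⟨w, show n • w ∈ fixedAddSubgroup G N from hw ▸ z.2⟩, Subtype.ext hw⟩

lemma mk_nsmulToFixed_eq_zero_iff (w : nsmulPreimageFixed G N n) :
    (QuotientAddGroup.mk (nsmulToFixed G N n w) :
        fixedAddSubgroup G N ⧸ nMultiples (fixedAddSubgroup G N) n) = 0 ↔
      ∃ y ∈ fixedAddSubgroup G N, n • y = n • (w : N) := by
  rw [QuotientAddGroup.eq_zero_iff]
  constructor
  · rintro ⟨y, hy⟩
    exact ⟨y, y.2, congrArg Subtype.val hy⟩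
  · rintro ⟨y, hy, hyw⟩
    exact ⟨⟨y, hy⟩, Subtype.ext hyw⟩

end Kummer

section Connecting

variable {G M N : Type} [Group G] [AddCommGroup M] [DistribMulAction G M]
  [AddCommGroup N] [DistribMulAction G N] {n : ℕ}
  (φ : M →+ N) (hφ : ∀ (g : G) (x : M), φ (g • x) = g • φ x)
  (hbij : Set.BijOn φ (nTorsion M n : Set M) (nTorsion N n : Set N))

noncomputable def kummerLift : nsmulPreimageFixed G N n →+ oneCocycles G M :=
  (oneCocyclesMap (nTorsion M n).subtype fun _ _ => rfl).comp
    ((oneCocyclesMap (nTorsionEquivOfBijOn φ hbij).symm.toAddMonoidHom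
      (nTorsionEquivOfBijOn_symm_smul φ hbij hφ)).comp (kummerHom G N n))

lemma kummerLift_apply (w : nsmulPreimageFixed G N n) (σ : G) :
    (kummerLift φ hφ hbij w : G → M) σ =
      (nTorsionEquivOfBijOn φ hbij).symm
        ⟨σ • w - w, smul_sub_self_mem_nTorsion (nsmul_mem_fixedAddSubgroup w) σ⟩ :=
  rfl

lemma map_kummerLift (w : nsmulPreimageFixed G N n) (σ : G) :
    φ ((kummerLift φ hφ hbij w : G → M) σ) = σ • (w : N) - w := by
  rw [kummerLift_apply, map_nTorsionEquivOfBijOn_symm]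

lemma kummerLift_eq_of_map {w : nsmulPreimageFixed G N n} {f : oneCocycles G M}
    (hf : ∀ σ, (f : G → M) σ ∈ nTorsion M n)
    (hφf : ∀ σ, φ ((f : G → M) σ) = σ • (w : N) - w) :
    kummerLift φ hφ hbij w = f := by
  ext σ
  rw [kummerLift_apply]
  exact congrArg Subtype.val (((nTorsionEquivOfBijOn φ hbij).symm_apply_eq (y := ⟨_, hf σ⟩)).2
    (Subtype.ext (hφf σ).symm))

noncomputable def connectingHom : nsmulPreimageFixed G N n →+ H1 G M :=
  (QuotientAddGroup.mk' _).comp (kummerLift φ hφ hbij)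

lemma connectingHom_apply (w : nsmulPreimageFixed G N n) :
    connectingHom φ hφ hbij w = H1mk G M (kummerLift φ hφ hbij w) :=
  rfl

lemma nsmul_connectingHom (w : nsmulPreimageFixed G N n) :
    n • connectingHom φ hφ hbij w = 0 := by
  have hnf : n • kummerLift φ hφ hbij w = 0 := by
    ext σ
    exact ((nTorsionEquivOfBijOn φ hbij).symm _).2
  rw [connectingHom_apply, ← H1mk_nsmul, hnf]
  rfl

lemma H1Map_connectingHom (w : nsmulPreimageFixed G N n) :
    H1Map φ hφ (connectingHom φ hφ hbij w) = 0 := by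
  rw [connectingHom_apply, H1Map_H1mk, H1mk_eq_zero_iff]
  exact ⟨w, map_kummerLift φ hφ hbij w⟩

lemma connectingHom_eq_zero_of_nsmul_eq (w : nsmulPreimageFixed G N n) {y : N}
    (hy : y ∈ fixedAddSubgroup G N) (hyw : n • y = n • (w : N)) :
    connectingHom φ hφ hbij w = 0 := by
  have hwy : (w : N) - y ∈ nTorsion N n := show n • ((w : N) - y) = 0 by
    rw [smul_sub, hyw, sub_self]
  set t : nTorsion M n := (nTorsionEquivOfBijOn φ hbij).symm ⟨_, hwy⟩
  have ht : φ t = w - y := map_nTorsionEquivOfBijOn_symm φ hbij _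
  have hlift : kummerLift φ hφ hbij w = coboundaryCocycle (t : M) := by
    refine kummerLift_eq_of_map φ hφ hbij (fun σ => (σ • t - t).2) fun σ => ?_
    show φ (σ • (t : M) - t) = σ • (w : N) - w
    rw [map_sub, hφ, ht, smul_sub, hy σ, sub_sub_sub_cancel_right]
  rw [connectingHom_apply, hlift, H1mk_coboundaryCocycle]

lemma exists_nsmul_eq_of_connectingHom_eq_zero
    (hzero : ∀ x : M, x ∈ fixedAddSubgroup G M →
      ∃ y ∈ fixedAddSubgroup G N, n • y = φ x)
    {w : nsmulPreimageFixed G N n} (hw : connectingHom φ hφ hbij w = 0) :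
    ∃ y ∈ fixedAddSubgroup G N, n • y = n • (w : N) := by
  obtain ⟨x, hx⟩ := (H1mk_eq_zero_iff _).1 hw
  have hx : ∀ σ : G, (kummerLift φ hφ hbij w : G → M) σ = σ • x - x := hx
  have hfixed : (w : N) - φ x ∈ fixedAddSubgroup G N := fun σ => by
    have h := map_kummerLift φ hφ hbij w σ
    rw [hx, map_sub, hφ, eq_comm, sub_eq_sub_iff_sub_eq_sub] at h
    rw [smul_sub, h]
  have hnx : n • x ∈ fixedAddSubgroup G M :=
    nsmul_mem_fixedAddSubgroup_of_smul_sub_self_mem_nTorsion fun σ =>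
      hx σ ▸ ((nTorsionEquivOfBijOn φ hbij).symm _).2
  obtain ⟨y₀, hy₀, hny₀⟩ := hzero (n • x) hnx
  refine ⟨(w - φ x) + y₀, add_mem hfixed hy₀, ?_⟩
  rw [smul_add, hny₀, map_nsmul, smul_sub, sub_add_cancel]

lemma exists_connectingHom_eq (hdivM : ∀ x : M, ∃ y : M, n • y = x) {c : H1 G M}
    (hc : n • c = 0) (hφc : H1Map φ hφ c = 0) :
    ∃ w, connectingHom φ hφ hbij w = c := by
  obtain ⟨f, rfl⟩ := H1mk_surjective c
  obtain ⟨m, hm⟩ := (H1mk_eq_zero_iff (n • f)).1 (by rw [H1mk_nsmul]; exact hc)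
  obtain ⟨y, rfl⟩ := hdivM m
  obtain ⟨x, hx⟩ := (H1mk_eq_zero_iff _).1 hφc
  set f' := f - coboundaryCocycle y
  have hf' : ∀ σ, (f' : G → M) σ ∈ nTorsion M n := fun σ => by
    have h : n • (f : G → M) σ = σ • (n • y) - n • y := hm σ
    show n • ((f : G → M) σ - (σ • y - y)) = 0
    rw [smul_sub, h, smul_sub, smul_comm n σ y, sub_self]
  have hφf' : ∀ σ, φ ((f' : G → M) σ) = σ • (x - φ y) - (x - φ y) := fun σ => by
    have h : φ ((f : G → M) σ) = σ • x - x := hx σ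
    show φ ((f : G → M) σ - (σ • y - y)) = _
    rw [map_sub, h, map_sub, hφ, smul_sub]
    abel
  have hv : x - φ y ∈ nsmulPreimageFixed G N n :=
    nsmul_mem_fixedAddSubgroup_of_smul_sub_self_mem_nTorsion fun σ =>
      hφf' σ ▸ hbij.mapsTo (hf' σ)
  refine ⟨⟨x - φ y, hv⟩, ?_⟩
  rw [connectingHom_apply, kummerLift_eq_of_map φ hφ hbij hf' hφf', H1mk_sub,
    H1mk_coboundaryCocycle, sub_zero]

noncomputable def connectingHomToKer :
    nsmulPreimageFixed G N n →+ (torsMap n (H1Map (G := G) φ hφ)).ker :=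
  ((connectingHom φ hφ hbij).codRestrict (nTorsion (H1 G M) n)
    fun w => mem_nTorsion.2 (nsmul_connectingHom φ hφ hbij w)).codRestrict _ fun w =>
      AddMonoidHom.mem_ker.2 (Subtype.ext (H1Map_connectingHom φ hφ hbij w))

lemma connectingHomToKer_surjective (hdivM : ∀ x : M, ∃ y : M, n • y = x) :
    Function.Surjective (connectingHomToKer φ hφ hbij) := by
  rintro ⟨⟨c, hc⟩, hφc⟩
  obtain ⟨w, hw⟩ := exists_connectingHom_eq φ hφ hbij hdivM hc (congrArg Subtype.val hφc)
  exact ⟨w, Subtype.ext (Subtype.ext hw)⟩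

lemma ker_connectingHomToKer
    (hzero : ∀ x : M, x ∈ fixedAddSubgroup G M →
      ∃ y ∈ fixedAddSubgroup G N, n • y = φ x) :
    (connectingHomToKer φ hφ hbij).ker =
      ((QuotientAddGroup.mk' (nMultiples (fixedAddSubgroup G N) n)).comp
        (nsmulToFixed G N n)).ker := by
  ext w
  rw [connectingHomToKer, AddMonoidHom.ker_codRestrict, AddMonoidHom.ker_codRestrict,
    AddMonoidHom.mem_ker, AddMonoidHom.mem_ker, AddMonoidHom.comp_apply,
    QuotientAddGroup.mk'_apply, mk_nsmulToFixed_eq_zero_iff]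
  exact ⟨exists_nsmul_eq_of_connectingHom_eq_zero φ hφ hbij hzero,
    fun ⟨_, hy, hyw⟩ => connectingHom_eq_zero_of_nsmul_eq φ hφ hbij w hy hyw⟩

end Connecting

theorem ker_H1_torsion_map_iso_fixed_quotient_general
    (G M N : Type) [Group G] [AddCommGroup M] [DistribMulAction G M]
    [AddCommGroup N] [DistribMulAction G N] (n : ℕ)
    (φ : M →+ N) (hφ : ∀ (g : G) (x : M), φ (g • x) = g • φ x)
    (hdivM : ∀ x : M, ∃ y : M, n • y = x) (hdivN : ∀ x : N, ∃ y : N, n • y = x)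
    (hbij : Set.BijOn φ (nTorsion M n : Set M) (nTorsion N n : Set N))
    (hzero : ∀ x : M, x ∈ fixedAddSubgroup G M →
      ∃ y ∈ fixedAddSubgroup G N, n • y = φ x) :
    Nonempty (↥((torsMap n (H1Map (G := G) φ hφ)).ker) ≃+
      (↥(fixedAddSubgroup G N) ⧸ nMultiples ↥(fixedAddSubgroup G N) n)) :=
  ⟨AddMonoidHom.addEquivOfKerEq _ _ (connectingHomToKer_surjective φ hφ hbij hdivM)
    ((QuotientAddGroup.mk'_surjective _).comp (nsmulToFixed_surjective hdivN))
    (ker_connectingHomToKer φ hφ hbij hzero)⟩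

/-- Let `φ : M → N` be a morphism of `n`-divisible `G`-modules
restricting to an isomorphism `M[n] → N[n]`, and suppose the induced map
`M^G/n·M^G → N^G/n·N^G` is zero. Then the kernel of the induced homomorphism
`H¹(G, M)[n] → H¹(G, N)[n]` is isomorphic to `N^G/n·N^G`. -/
theorem ker_H1_torsion_map_iso_fixed_quotient
    (G M N : Type) [Group G] [AddCommGroup M] [DistribMulAction G M]
    [AddCommGroup N] [DistribMulAction G N] (n : ℕ) (hn : 0 < n)
    (φ : M →+ N) (hφ : ∀ (g : G) (x : M), φ (g • x) = g • φ x)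
    (hdivM : ∀ x : M, ∃ y : M, n • y = x) (hdivN : ∀ x : N, ∃ y : N, n • y = x)
    (hbij : Set.BijOn φ (nTorsion M n : Set M) (nTorsion N n : Set N))
    (hzero : ∀ x : M, x ∈ fixedAddSubgroup G M →
      ∃ y ∈ fixedAddSubgroup G N, n • y = φ x) :
    Nonempty (↥((torsMap n (H1Map (G := G) φ hφ)).ker) ≃+
      (↥(fixedAddSubgroup G N) ⧸ nMultiples ↥(fixedAddSubgroup G N) n)) :=
  ker_H1_torsion_map_iso_fixed_quotient_general G M N n φ hφ hdivM hdivN hbij hzero
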